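/- arXiv:0802.3865 — 2 statements merged into one kernel-verified Lean document; each statement's English description precedes it below -/
import Mathlib

section
/- Let L = 𝒜 ⊕ k·x be a Lie-like algebra^{2-nd} over an algebraically closed field k of characteristic 0, where 𝒜 is an ideal of L and ⟨L, L⟩_s ⊆ 𝒜 for all s ∈ S. Let (V, {f_k}, {g_k}) be a finite-dimensional ordinary L-module, u_0 ∈ V, and suppose f_k(A)(u_0) = φ_k(A) u_0 and g_k(A)(u_0) = ψ_k(A) u_0 for all A ∈ 𝒜 and k ∈ S, where φ_k, ψ_k : 𝒜 → k are functionals. Fix h ∈ S and set u_m := g_h(x)^m(u_0). Then for all m ≥ 0, A ∈ 𝒜 and k ∈ S: f_k(A)(u_m) ≡ φ_k(A) u_m and g_k(A)(u_m) ≡ ψ_k(A) u_m modulo the subspace V^{ann,+} + span{u_0, …, u_{m−1}}, and f_k(x)(u_m) ≡ u_{m+1} modulo V^{ann,+} + span{u_0, …, u_m}. -/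
/-!
Modulo the plus annihilator `N`, every `g_s(y)` agrees with every `f_t(y)`, and the relations
`g_k(x) g_h(y) = g_h(x) f_k(y) = g_k(x) f_h(y)` make `N` stable under each `g_h(y)`. Hence
`T := g_h(x)` acts on `V/N` and `f_k(x) u_m ≡ g_h(x) u_m = u_{m+1}`. For `a ∈ 𝒜` the identity
`f_k(a) T = T f_k(a) - g_h(⟨x, a⟩_k)` with `⟨x, a⟩_k ∈ 𝒜` lets one push `f_k(a)` past `T` by
induction on `m`, and the congruence for `g_k(a)` follows from the one for `f_k(a)` because
`(φ_k(a) - ψ_k(a)) u_0 = (f_k(a) - g_k(a)) u_0 ∈ N`.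
-/

namespace OrdinaryModule

open Submodule

variable {K S L V : Type*} [Field K] [AddCommGroup L] [Module K L] [AddCommGroup V] [Module K V]

section PlusAnnihilator

variable (f g : S → L →ₗ[K] Module.End K V)

def plusAnnihilator : Submodule K V :=
  span K {w : V | ∃ (s t : S) (y : L) (v : V), w = (g s y - f t y) v}

variable {f g}

theorem sub_mem_plusAnnihilator (s t : S) (y : L) (v : V) :
    g s y v - f t y v ∈ plusAnnihilator f g :=
  subset_span ⟨s, t, y, v, rfl⟩

theorem g_apply_mem_plusAnnihilator
    (hgg : ∀ (h k : S) (x y : L),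
      g k x * g h y = g h x * f k y ∧ g h x * f k y = g k x * f h y)
    (k : S) (y : L) {w : V} (hw : w ∈ plusAnnihilator f g) :
    g k y w ∈ plusAnnihilator f g := by
  induction hw using span_induction with
  | mem _ hw =>
    obtain ⟨s, t, z, v, rfl⟩ := hw
    have hs := DFunLike.congr_fun (hgg s k y z).1 v
    have ht := DFunLike.congr_fun (hgg k t y z).2 v
    simp only [Module.End.mul_apply] at hs ht
    have key : g k y ((g s z - f t z) v) =
        (g s y (f k z v) - f k y (f k z v)) - (g t y (f k z v) - f k y (f k z v)) := by
      rw [LinearMap.sub_apply, map_sub, hs, ht]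
      abel
    rw [key]
    exact sub_mem (sub_mem_plusAnnihilator _ _ _ _) (sub_mem_plusAnnihilator _ _ _ _)
  | zero => simp
  | add _ _ _ _ h₁ h₂ => rw [map_add]; exact add_mem h₁ h₂
  | smul c _ _ h => rw [map_smul]; exact smul_mem _ c h

end PlusAnnihilator

section OrbitSpan

variable (T : Module.End K V) (u : V)

def orbitSpan (m : ℕ) : Submodule K V :=
  span K (Set.range fun i : Fin m => (T ^ (i : ℕ)) u)

variable {T u}

theorem pow_apply_mem_orbitSpan {i m : ℕ} (hi : i < m) : (T ^ i) u ∈ orbitSpan T u m :=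
  subset_span ⟨⟨i, hi⟩, rfl⟩

theorem orbitSpan_mono {m n : ℕ} (hmn : m ≤ n) : orbitSpan T u m ≤ orbitSpan T u n :=
  span_le.mpr <| Set.range_subset_iff.mpr fun i => pow_apply_mem_orbitSpan (i.2.trans_le hmn)

theorem orbitSpan_le_comap_succ (m : ℕ) : orbitSpan T u m ≤ (orbitSpan T u (m + 1)).comap T :=
  span_le.mpr <| Set.range_subset_iff.mpr fun i => by
    simpa only [SetLike.mem_coe, mem_comap, ← Module.End.mul_apply, ← pow_succ']
      using pow_apply_mem_orbitSpan (T := T) (u := u) (Nat.succ_lt_succ i.2)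

theorem apply_mem_sup_orbitSpan_succ {N : Submodule K V} (hN : ∀ w ∈ N, T w ∈ N) {m : ℕ}
    {w : V} (hw : w ∈ N ⊔ orbitSpan T u m) : T w ∈ N ⊔ orbitSpan T u (m + 1) := by
  have hle : N ⊔ orbitSpan T u m ≤ (N ⊔ orbitSpan T u (m + 1)).comap T :=
    sup_le (fun v hv => mem_sup_left (hN v hv))
      ((orbitSpan_le_comap_succ m).trans (comap_mono le_sup_right))
  exact hle hw

end OrbitSpan

variable {f g : S → L →ₗ[K] Module.End K V}
  (hgg : ∀ (h k : S) (x y : L),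
    g k x * g h y = g h x * f k y ∧ g h x * f k y = g k x * f h y)
include hgg

theorem g_sub_smul_mem_of_f_sub_smul_mem {P : Submodule K V} {u₀ : V} {k h : S} {a x : L}
    {c d : K} (hfu₀ : f k a u₀ = c • u₀) (hgu₀ : g k a u₀ = d • u₀) {n : ℕ}
    (hf : f k a ((g h x ^ n) u₀) - c • (g h x ^ n) u₀ ∈ plusAnnihilator f g ⊔ P) :
    g k a ((g h x ^ n) u₀) - d • (g h x ^ n) u₀ ∈ plusAnnihilator f g ⊔ P := by
  have hscalar : c • (g h x ^ n) u₀ - d • (g h x ^ n) u₀ ∈ plusAnnihilator f g := by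
    rw [← map_smul, ← map_smul, ← map_sub, ← hfu₀, ← hgu₀, ← neg_sub]
    exact Module.End.pow_apply_mem_of_forall_mem n
      (fun _ => g_apply_mem_plusAnnihilator hgg h x) _
      (neg_mem (sub_mem_plusAnnihilator k k a u₀))
  have hsplit : g k a ((g h x ^ n) u₀) - d • (g h x ^ n) u₀ =
      (g k a ((g h x ^ n) u₀) - f k a ((g h x ^ n) u₀)) +
      (f k a ((g h x ^ n) u₀) - c • (g h x ^ n) u₀) +
      (c • (g h x ^ n) u₀ - d • (g h x ^ n) u₀) := by abel
  rw [hsplit]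
  exact add_mem (add_mem (mem_sup_left (sub_mem_plusAnnihilator _ _ _ _)) hf)
    (mem_sup_left hscalar)

theorem f_sub_smul_mem_sup_orbitSpan (br : S → L →ₗ[K] L →ₗ[K] L)
    (hg : ∀ (h k : S) (x y : L), g h (br k x y) = g h x * f k y - f k y * g h x)
    {A : Submodule K L} {x : L} (hxA : ∀ (k : S), ∀ a ∈ A, br k x a ∈ A)
    {u₀ : V} {φ ψ : S → A → K}
    (hfu₀ : ∀ (k : S) (a : A), f k a u₀ = φ k a • u₀)
    (hgu₀ : ∀ (k : S) (a : A), g k a u₀ = ψ k a • u₀) (h : S) (m : ℕ) (a : A) (k : S) :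
    f k a ((g h x ^ m) u₀) - φ k a • (g h x ^ m) u₀ ∈
      plusAnnihilator f g ⊔ orbitSpan (g h x) u₀ m := by
  induction m generalizing a k with
  | zero => simp [hfu₀]
  | succ m ih =>
    set T := g h x
    set u := (T ^ m) u₀
    let a' : A := ⟨br k x a, hxA k a a.2⟩
    have hpow : (T ^ (m + 1)) u₀ = T u := by rw [pow_succ', Module.End.mul_apply]
    have hcomm : f k a (T u) = T (f k a u) - g h a' u := by
      rw [show g h a' = g h (br k x a) from rfl, hg]
      simp only [LinearMap.sub_apply, Module.End.mul_apply]
      exact (sub_sub_cancel _ _).symm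
    have hsplit : f k a ((T ^ (m + 1)) u₀) - φ k a • (T ^ (m + 1)) u₀ =
        T (f k a u - φ k a • u) - (g h a' u - ψ h a' • u) - ψ h a' • u := by
      rw [hpow, hcomm, map_sub, map_smul]
      abel
    rw [hsplit]
    refine sub_mem (sub_mem ?_ ?_) (mem_sup_right (smul_mem _ _ ?_))
    · exact apply_mem_sup_orbitSpan_succ (fun _ => g_apply_mem_plusAnnihilator hgg h x) (ih a k)
    · exact sup_le_sup_left (orbitSpan_mono (T := T) (u := u₀) m.le_succ) (plusAnnihilator f g)
        (g_sub_smul_mem_of_f_sub_smul_mem hgg (hfu₀ h a') (hgu₀ h a') (ih a' h))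
    · exact pow_apply_mem_orbitSpan m.lt_succ_self

end OrdinaryModule

open OrdinaryModule in
theorem stmt_6_general {K : Type*} [Field K]
    {S : Type*}
    {L : Type*} [AddCommGroup L] [Module K L]
    {V : Type*} [AddCommGroup V] [Module K V]
    (br : S → L →ₗ[K] L →ₗ[K] L)
    (A : Submodule K L) (x : L)
    (hideal : ∀ (s : S), ∀ a ∈ A, ∀ z : L, br s a z ∈ A ∧ br s z a ∈ A)
    (f g : S → L →ₗ[K] Module.End K V)
    (hg : ∀ (h k : S) (x y : L), g h (br k x y) = g h x * f k y - f k y * g h x)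
    (hgg : ∀ (h k : S) (x y : L),
      g k x * g h y = g h x * f k y ∧ g h x * f k y = g k x * f h y)
    (u0 : V) (φ ψ : S → A → K)
    (hfu0 : ∀ (k : S) (a : A), f k a.1 u0 = φ k a • u0)
    (hgu0 : ∀ (k : S) (a : A), g k a.1 u0 = ψ k a • u0)
    (h : S) :
    ∀ (m : ℕ) (a : A) (k : S),
      (f k a.1 (((g h x) ^ m) u0) - φ k a • ((g h x) ^ m) u0 ∈
        Submodule.span K
          {w : V | ∃ (s t : S) (y : L) (v : V), w = (g s y - f t y) v} ⊔
        Submodule.span K (Set.range fun i : Fin m => ((g h x) ^ (i : ℕ)) u0)) ∧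
      (g k a.1 (((g h x) ^ m) u0) - ψ k a • ((g h x) ^ m) u0 ∈
        Submodule.span K
          {w : V | ∃ (s t : S) (y : L) (v : V), w = (g s y - f t y) v} ⊔
        Submodule.span K (Set.range fun i : Fin m => ((g h x) ^ (i : ℕ)) u0)) ∧
      (f k x (((g h x) ^ m) u0) - ((g h x) ^ (m + 1)) u0 ∈
        Submodule.span K
          {w : V | ∃ (s t : S) (y : L) (v : V), w = (g s y - f t y) v} ⊔
        Submodule.span K
          (Set.range fun i : Fin (m + 1) => ((g h x) ^ (i : ℕ)) u0)) := by
  intro m a k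
  have hf_congr : f k a ((g h x ^ m) u0) - φ k a • (g h x ^ m) u0 ∈
      plusAnnihilator f g ⊔ orbitSpan (g h x) u0 m :=
    f_sub_smul_mem_sup_orbitSpan hgg br hg (fun k a ha => (hideal k a ha x).2) hfu0 hgu0 h m a k
  refine ⟨hf_congr, g_sub_smul_mem_of_f_sub_smul_mem hgg (hfu0 k a) (hgu0 k a) hf_congr, ?_⟩
  have hx_congr : f k x ((g h x ^ m) u0) - (g h x ^ (m + 1)) u0 =
      -(g h x ((g h x ^ m) u0) - f k x ((g h x ^ m) u0)) := by
    rw [pow_succ', Module.End.mul_apply, neg_sub]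
  rw [hx_congr]
  exact Submodule.mem_sup_left (neg_mem (sub_mem_plusAnnihilator h k x _))

/-- Proposition 2.2: congruences for u_m = g_h(x)^m(u_0) modulo the plus
    annihilator plus the span of the earlier u_i's. -/
theorem stmt_6 {K : Type*} [Field K] [IsAlgClosed K] [CharZero K]
    {S : Type*} [Nonempty S]
    {L : Type*} [AddCommGroup L] [Module K L]
    {V : Type*} [AddCommGroup V] [Module K V] [FiniteDimensional K V]
    (br : S → L →ₗ[K] L →ₗ[K] L)
    (hjac : ∀ (s h : S) (x y z : L),
      br h (br s x y) z = br s x (br h y z) + br s (br h x z) y)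
    (hsw : ∀ (s h : S) (x y z : L), br h (br s x y) z = br s (br h x y) z)
    (A : Submodule K L) (x : L) (hx : x ∉ A)
    (hcompl : IsCompl A (Submodule.span K {x}))
    (hideal : ∀ (s : S), ∀ a ∈ A, ∀ z : L, br s a z ∈ A ∧ br s z a ∈ A)
    (hLL : ∀ (s : S) (a b : L), br s a b ∈ A)
    (f g : S → L →ₗ[K] Module.End K V)
    (hf : ∀ (h k : S) (x y : L), f h (br k x y) = f h x * f k y - f k y * f h x)
    (hg : ∀ (h k : S) (x y : L), g h (br k x y) = g h x * f k y - f k y * g h x)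
    (hgg : ∀ (h k : S) (x y : L),
      g k x * g h y = g h x * f k y ∧ g h x * f k y = g k x * f h y)
    (hff : ∀ (h k : S) (x y : L), f k x * f h y = f h x * f k y)
    (hfg : ∀ (h k : S) (x y : L), f k x * g h y = f h x * g k y)
    (u0 : V) (φ ψ : S → A → K)
    (hfu0 : ∀ (k : S) (a : A), f k a.1 u0 = φ k a • u0)
    (hgu0 : ∀ (k : S) (a : A), g k a.1 u0 = ψ k a • u0)
    (h : S) :
    ∀ (m : ℕ) (a : A) (k : S),
      (f k a.1 (((g h x) ^ m) u0) - φ k a • ((g h x) ^ m) u0 ∈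
        Submodule.span K
          {w : V | ∃ (s t : S) (y : L) (v : V), w = (g s y - f t y) v} ⊔
        Submodule.span K (Set.range fun i : Fin m => ((g h x) ^ (i : ℕ)) u0)) ∧
      (g k a.1 (((g h x) ^ m) u0) - ψ k a • ((g h x) ^ m) u0 ∈
        Submodule.span K
          {w : V | ∃ (s t : S) (y : L) (v : V), w = (g s y - f t y) v} ⊔
        Submodule.span K (Set.range fun i : Fin m => ((g h x) ^ (i : ℕ)) u0)) ∧
      (f k x (((g h x) ^ m) u0) - ((g h x) ^ (m + 1)) u0 ∈
        Submodule.span K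
          {w : V | ∃ (s t : S) (y : L) (v : V), w = (g s y - f t y) v} ⊔
        Submodule.span K
          (Set.range fun i : Fin (m + 1) => ((g h x) ^ (i : ℕ)) u0)) :=
  stmt_6_general br A x hideal f g hg hgg u0 φ ψ hfu0 hgu0 h
end

section
/- With L = 𝒜 ⊕ k·x a Lie-like algebra^{2-nd} over an algebraically closed field of characteristic 0, 𝒜 an ideal with ⟨L,L⟩_s ⊆ 𝒜, and V a finite-dimensional ordinary L-module: for every u ∈ (U_φ ∩ U_ψ) \\ V^{ann,+} and every h ∈ S, the vector g_h(x)(u) lies in U_φ, i.e., f_k(A)(g_h(x)(u)) = φ_k(A)·g_h(x)(u) for all A ∈ 𝒜 and k ∈ S. -/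
/-!
Put `b = ⟨x, a⟩_k ∈ 𝒜`. Because `[f_h(x), f_j(c)] = f_h(⟨x, c⟩_j)` and `⟨x, c⟩_j ∈ 𝒜`,
the operators `f_j(c)` (`c ∈ 𝒜`) have the common eigenvector `u` and are mapped into one
another by commutation with `f_h(x)`. Lie's invariance lemma therefore gives
`f_h(b) u = [f_h(x), f_k(a)] u = 0`. Then `ψ_h(b) u = g_h(b) u = (g_h(b) - f_h(b)) u ∈ V^{ann,+}`,
so `ψ_h(b) = 0` as `u ∉ V^{ann,+}`, and applying `g_h(b) = [g_h(x), f_k(a)]` to `u` yields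
`f_k(a) g_h(x) u = g_h(x) f_k(a) u = φ_k(a) g_h(x) u`.
-/

open Module LinearMap Set

lemma LinearMap.trace_restrict_eq_mul_finrank_of_le_maxGenEigenspace {K V : Type*} [Field K]
    [AddCommGroup V] [Module K V] [FiniteDimensional K V] {f : End K V} {μ : K}
    {p : Submodule K V} (hp : ∀ v ∈ p, f v ∈ p) (hle : p ≤ f.maxGenEigenspace μ) :
    trace K p (f.restrict hp) = μ * finrank K p := by
  have hp' : ∀ v ∈ p, (f - algebraMap K (End K V) μ) v ∈ p := fun v hv => by
    simpa [Algebra.algebraMap_eq_smul_one] using p.sub_mem (hp v hv) (p.smul_mem μ hv)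
  have hnil : IsNilpotent (f.restrict hp - algebraMap K _ μ) := by
    have : f.restrict hp - algebraMap K _ μ = (f - algebraMap K _ μ).restrict hp' := by
      ext; simp [Algebra.algebraMap_eq_smul_one]
    rw [this]
    exact Module.End.isNilpotent_restrict_of_le hle
      (f.isNilpotent_restrict_maxGenEigenspace_sub_algebraMap μ)
  calc trace K p (f.restrict hp)
      = trace K p (f.restrict hp - algebraMap K _ μ) + trace K p (algebraMap K _ μ) := by
        rw [← map_add, sub_add_cancel]
    _ = μ * finrank K p := by
        rw [(isNilpotent_trace_of_isNilpotent hnil).eq_zero, zero_add,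
          Algebra.algebraMap_eq_smul_one, map_smul, trace_one, smul_eq_mul]

namespace Module.End

variable {K V : Type*} [Field K] [AddCommGroup V] [Module K V] (B : End K V) (u : V)

def krylov (n : ℕ) : Submodule K V :=
  Submodule.span K ((fun i => (B ^ i) u) '' Iio n)

def cyclicSubspace : Submodule K V :=
  Submodule.span K (range fun i => (B ^ i) u)

variable {B u}

lemma krylov_zero : krylov B u 0 = ⊥ := by
  simp [krylov]

lemma krylov_mono : Monotone (krylov B u) := fun _ _ hmn =>
  Submodule.span_mono (image_mono fun _ hi => lt_of_lt_of_le hi hmn)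

lemma pow_apply_mem_krylov {i n : ℕ} (h : i < n) : (B ^ i) u ∈ krylov B u n :=
  Submodule.subset_span ⟨i, h, rfl⟩

lemma pow_apply_mem_cyclicSubspace (i : ℕ) : (B ^ i) u ∈ cyclicSubspace B u :=
  Submodule.subset_span ⟨i, rfl⟩

lemma self_mem_cyclicSubspace : u ∈ cyclicSubspace B u := by
  simpa using pow_apply_mem_cyclicSubspace (B := B) (u := u) 0

lemma krylov_le_cyclicSubspace (n : ℕ) : krylov B u n ≤ cyclicSubspace B u :=
  Submodule.span_mono (image_subset_range _ _)

lemma apply_mem_krylov_succ {n : ℕ} {v : V} (hv : v ∈ krylov B u n) :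
    B v ∈ krylov B u (n + 1) := by
  refine (Submodule.span_le (p := (krylov B u (n + 1)).comap B)).2 ?_ hv
  rintro _ ⟨i, hi, rfl⟩
  rw [SetLike.mem_coe, Submodule.mem_comap, ← mul_apply, ← pow_succ']
  exact pow_apply_mem_krylov (Nat.succ_lt_succ hi)

lemma apply_mem_cyclicSubspace {v : V} (hv : v ∈ cyclicSubspace B u) :
    B v ∈ cyclicSubspace B u := by
  refine (Submodule.span_le (p := (cyclicSubspace B u).comap B)).2 ?_ hv
  rintro _ ⟨i, rfl⟩
  rw [SetLike.mem_coe, Submodule.mem_comap, ← mul_apply, ← pow_succ']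
  exact pow_apply_mem_cyclicSubspace (i + 1)

variable {ι : Type*} {T : ι → End K V} {χ : ι → K}

lemma sub_smul_one_apply_pow_mem_krylov (hT : ∀ i, T i u = χ i • u)
    (hB : ∀ i, ∃ j, B * T i - T i * B = T j) (n : ℕ) (i : ι) :
    (T i - χ i • 1) ((B ^ n) u) ∈ krylov B u n := by
  induction n generalizing i with
  | zero => simp [hT]
  | succ n ih =>
    obtain ⟨j, hj⟩ := hB i
    have hcomm : (T i - χ i • 1) ((B ^ (n + 1)) u)
        = B ((T i - χ i • 1) ((B ^ n) u)) - (T j - χ j • 1) ((B ^ n) u)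
          - χ j • (B ^ n) u := by
      rw [pow_succ', ← hj]
      simp only [LinearMap.sub_apply, mul_apply, LinearMap.smul_apply, one_apply, map_sub,
        map_smul]
      abel
    rw [hcomm]
    exact sub_mem (sub_mem (apply_mem_krylov_succ (ih i)) (krylov_mono n.le_succ (ih j)))
      (Submodule.smul_mem _ _ (pow_apply_mem_krylov n.lt_succ_self))

lemma krylov_le_ker_pow (hT : ∀ i, T i u = χ i • u) (hB : ∀ i, ∃ j, B * T i - T i * B = T j)
    (n : ℕ) (i : ι) : krylov B u n ≤ ker ((T i - χ i • 1) ^ n) := by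
  induction n with
  | zero => simp [krylov_zero]
  | succ n ih =>
    refine Submodule.span_le.2 ?_
    rintro _ ⟨m, hm, rfl⟩
    rw [SetLike.mem_coe, mem_ker, pow_succ, mul_apply]
    exact ih (krylov_mono (Nat.lt_succ_iff.1 hm) (sub_smul_one_apply_pow_mem_krylov hT hB m i))

lemma cyclicSubspace_le_maxGenEigenspace (hT : ∀ i, T i u = χ i • u)
    (hB : ∀ i, ∃ j, B * T i - T i * B = T j) (i : ι) :
    cyclicSubspace B u ≤ (T i).maxGenEigenspace (χ i) := by
  refine Submodule.span_le.2 ?_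
  rintro _ ⟨n, rfl⟩
  exact (mem_maxGenEigenspace _ _ _).2
    ⟨n + 1, krylov_le_ker_pow hT hB (n + 1) i (pow_apply_mem_krylov n.lt_succ_self)⟩

lemma apply_mem_cyclicSubspace_of_apply_eq_smul (hT : ∀ i, T i u = χ i • u)
    (hB : ∀ i, ∃ j, B * T i - T i * B = T j) (i : ι) {v : V} (hv : v ∈ cyclicSubspace B u) :
    T i v ∈ cyclicSubspace B u := by
  refine (Submodule.span_le (p := (cyclicSubspace B u).comap (T i))).2 ?_ hv
  rintro _ ⟨n, rfl⟩
  have hsplit : T i ((B ^ n) u) = (T i - χ i • 1) ((B ^ n) u) + χ i • (B ^ n) u := by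
    simp
  rw [SetLike.mem_coe, Submodule.mem_comap, hsplit]
  exact add_mem (krylov_le_cyclicSubspace n (sub_smul_one_apply_pow_mem_krylov hT hB n i))
    (Submodule.smul_mem _ _ (pow_apply_mem_cyclicSubspace n))

/-- The trace of `[B, T i] = T j` on the cyclic subspace of `u` is `0`, being a commutator, and
`χ j • dim`, because `T j` has the single generalized eigenvalue `χ j` there. -/
theorem commutator_apply_eq_zero_of_apply_eq_smul [CharZero K] [FiniteDimensional K V]
    (hT : ∀ i, T i u = χ i • u) (hB : ∀ i, ∃ j, B * T i - T i * B = T j) (i : ι) :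
    (B * T i - T i * B) u = 0 := by
  obtain ⟨j, hj⟩ := hB i
  rcases eq_or_ne u 0 with rfl | hu
  · exact map_zero _
  set W := cyclicSubspace B u
  have hBW : ∀ v ∈ W, B v ∈ W := fun _ => apply_mem_cyclicSubspace
  have hTW : ∀ k, ∀ v ∈ W, T k v ∈ W := fun k _ =>
    apply_mem_cyclicSubspace_of_apply_eq_smul hT hB k
  have htrace : χ j * finrank K W = 0 := by
    rw [← trace_restrict_eq_mul_finrank_of_le_maxGenEigenspace (hTW j)
      (cyclicSubspace_le_maxGenEigenspace hT hB j)]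
    have hres : (T j).restrict (hTW j)
        = B.restrict hBW * (T i).restrict (hTW i)
          - (T i).restrict (hTW i) * B.restrict hBW := by
      ext; simp [← hj]
    rw [hres, map_sub, trace_mul_comm, sub_self]
  have hW : finrank K W ≠ 0 := by
    rw [Ne, Submodule.finrank_eq_zero]
    intro hW
    exact hu ((Submodule.mem_bot K).1 (hW ▸ self_mem_cyclicSubspace))
  have hχ : χ j = 0 := by simpa [hW] using htrace
  rw [hj, hT, hχ, zero_smul]

end Module.End

theorem stmt_9_general {K : Type*} [Field K] [CharZero K]
    {S : Type*}
    {L : Type*} [AddCommGroup L] [Module K L]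
    {V : Type*} [AddCommGroup V] [Module K V] [FiniteDimensional K V]
    (br : S → L →ₗ[K] L →ₗ[K] L)
    (A : Submodule K L) (x : L)
    (hLL : ∀ (s : S) (a b : L), br s a b ∈ A)
    (f g : S → L →ₗ[K] Module.End K V)
    (hf : ∀ (h k : S) (x y : L), f h (br k x y) = f h x * f k y - f k y * f h x)
    (hg : ∀ (h k : S) (x y : L), g h (br k x y) = g h x * f k y - f k y * g h x)
    (φ ψ : S → A → K) (u : V)
    (hfu : ∀ (k : S) (a : A), f k a.1 u = φ k a • u)
    (hgu : ∀ (k : S) (a : A), g k a.1 u = ψ k a • u)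
    (hann : u ∉ Submodule.span K
      {w : V | ∃ (s t : S) (y : L) (v : V), w = (g s y - f t y) v}) :
    ∀ (h : S), ∀ (k : S) (a : A),
      f k a.1 (g h x u) = φ k a • g h x u := by
  intro h k a
  let b : A := ⟨br k x a, hLL k x a⟩
  have hB : ∀ p : S × A, ∃ q : S × A,
      f h x * f p.1 p.2 - f p.1 p.2 * f h x = f q.1 q.2 :=
    fun p => ⟨(h, ⟨br p.1 x p.2, hLL _ _ _⟩), (hf _ _ _ _).symm⟩
  have hfb : f h b u = 0 := by
    rw [hf]
    exact Module.End.commutator_apply_eq_zero_of_apply_eq_smul (fun p => hfu p.1 p.2) hB (k, a)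
  have hgb : g h b u = 0 := by
    have hmem : (g h b - f h b) u ∈ Submodule.span K
        {w : V | ∃ (s t : S) (y : L) (v : V), w = (g s y - f t y) v} :=
      Submodule.subset_span ⟨h, h, b, u, rfl⟩
    rw [LinearMap.sub_apply, hfb, sub_zero, hgu] at hmem
    have hψ : ψ h b = 0 := by
      by_contra hψ
      exact hann ((Submodule.smul_mem_iff _ hψ).1 hmem)
    rw [hgu, hψ, zero_smul]
  have hcomm := congr($(hg h k x a) u)
  rw [hgb, LinearMap.sub_apply, Module.End.mul_apply, Module.End.mul_apply, hfu,
    map_smul] at hcomm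
  exact (sub_eq_zero.1 hcomm.symm).symm

/-- Proposition 2.3 (2.22)/(2.27): for u ∈ (U_φ ∩ U_ψ) \ V^{ann,+},
    g_h(x)(u) ∈ U_φ. -/
theorem stmt_9 {K : Type*} [Field K] [IsAlgClosed K] [CharZero K]
    {S : Type*} [Nonempty S]
    {L : Type*} [AddCommGroup L] [Module K L]
    {V : Type*} [AddCommGroup V] [Module K V] [FiniteDimensional K V]
    (br : S → L →ₗ[K] L →ₗ[K] L)
    (hjac : ∀ (s h : S) (x y z : L),
      br h (br s x y) z = br s x (br h y z) + br s (br h x z) y)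
    (hsw : ∀ (s h : S) (x y z : L), br h (br s x y) z = br s (br h x y) z)
    (A : Submodule K L) (x : L) (hx : x ∉ A)
    (hcompl : IsCompl A (Submodule.span K {x}))
    (hideal : ∀ (s : S), ∀ a ∈ A, ∀ z : L, br s a z ∈ A ∧ br s z a ∈ A)
    (hLL : ∀ (s : S) (a b : L), br s a b ∈ A)
    (f g : S → L →ₗ[K] Module.End K V)
    (hf : ∀ (h k : S) (x y : L), f h (br k x y) = f h x * f k y - f k y * f h x)
    (hg : ∀ (h k : S) (x y : L), g h (br k x y) = g h x * f k y - f k y * g h x)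
    (hgg : ∀ (h k : S) (x y : L),
      g k x * g h y = g h x * f k y ∧ g h x * f k y = g k x * f h y)
    (hff : ∀ (h k : S) (x y : L), f k x * f h y = f h x * f k y)
    (hfg : ∀ (h k : S) (x y : L), f k x * g h y = f h x * g k y)
    (φ ψ : S → A → K) (u : V)
    (hfu : ∀ (k : S) (a : A), f k a.1 u = φ k a • u)
    (hgu : ∀ (k : S) (a : A), g k a.1 u = ψ k a • u)
    (hann : u ∉ Submodule.span K
      {w : V | ∃ (s t : S) (y : L) (v : V), w = (g s y - f t y) v}) :
    ∀ (h : S), ∀ (k : S) (a : A),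
      f k a.1 (g h x u) = φ k a • g h x u :=
  stmt_9_general br A x hLL f g hf hg φ ψ u hfu hgu hann
end
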